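/- In the circuit F* constructed from a type-respecting simplified clique decomposition, every path of the DAG that starts at an original gate and contains no adjacency wires consists only of child-parent wires, and every path that ends at an original gate and contains no adjacency wires consists only of parent-child wires. -/

import Mathlib

/-- A simplified clique decomposition (scd), presented as the term generating
the final labeled graph: leaves introduce single vertices with a singleton
label, binary nodes take disjoint unions, and unary nodes add a new vertex,
unite two labels, or add all edges (arcs) between two labels. -/
inductive SCD (V : Type) where
  | leaf (v : V) : SCD V
  | union (l r : SCD V) : SCD V
  | addVertex (t : SCD V) (v : V) : SCD V
  | unite (t : SCD V) (S₁ S₂ : Finset V) : SCD V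
  | addAdj (t : SCD V) (S₁ S₂ : Finset V) : SCD V

variable {V : Type} [DecidableEq V]

/-- The vertex set of the labeled graph produced by an scd. -/
def SCD.verts : SCD V → Finset V
  | .leaf v => {v}
  | .union l r => l.verts ∪ r.verts
  | .addVertex t v => t.verts ∪ {v}
  | .unite t _ _ => t.verts
  | .addAdj t _ _ => t.verts

/-- The set of labels (the partition of the vertices) of the graph produced. -/
def SCD.labels : SCD V → Finset (Finset V)
  | .leaf v => {{v}}
  | .union l r => l.labels ∪ r.labels
  | .addVertex t v => t.labels ∪ {{v}}
  | .unite t S₁ S₂ => (t.labels \ {S₁, S₂}) ∪ {S₁ ∪ S₂}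
  | .addAdj t _ _ => t.labels

/-- Well-formedness of an scd: unions are of vertex-disjoint graphs, added
vertices are new, and the unite/new-adjacency operations are applied to two
distinct existing labels. -/
def SCD.WF : SCD V → Prop
  | .leaf _ => True
  | .union l r => l.WF ∧ r.WF ∧ Disjoint l.verts r.verts
  | .addVertex t v => t.WF ∧ v ∉ t.verts
  | .unite t S₁ S₂ => t.WF ∧ S₁ ∈ t.labels ∧ S₂ ∈ t.labels ∧ S₁ ≠ S₂
  | .addAdj t S₁ S₂ => t.WF ∧ S₁ ∈ t.labels ∧ S₂ ∈ t.labels ∧ S₁ ≠ S₂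

/-- The set 𝐒(T,𝐆) of all labels appearing at any node of the decomposition. -/
def SCD.allLabels : SCD V → Finset (Finset V)
  | .leaf v => {{v}}
  | .union l r => l.allLabels ∪ r.allLabels
  | .addVertex t v => t.allLabels ∪ {{v}}
  | .unite t S₁ S₂ => t.allLabels ∪ {S₁ ∪ S₂}
  | .addAdj t _ _ => t.allLabels

/-- `T.isChild S₁ S₂`: the label `S₂` was created by uniting `S₁` with another
label somewhere in the decomposition (so `S₁` is a child of `S₂`). -/
def SCD.isChild : SCD V → Finset V → Finset V → Prop
  | .leaf _ => fun _ _ => False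
  | .union l r => fun A B => l.isChild A B ∨ r.isChild A B
  | .addVertex t _ => t.isChild
  | .unite t S₁ S₂ => fun A B => t.isChild A B ∨ ((A = S₁ ∨ A = S₂) ∧ B = S₁ ∪ S₂)
  | .addAdj t _ _ => t.isChild

/-- `T.isAdjArc S₁ S₂`: the new-adjacency operation was applied somewhere in the
decomposition, introducing all arcs from the label `S₁` to the label `S₂`. -/
def SCD.isAdjArc : SCD V → Finset V → Finset V → Prop
  | .leaf _ => fun _ _ => False
  | .union l r => fun A B => l.isAdjArc A B ∨ r.isAdjArc A B
  | .addVertex t _ => t.isAdjArc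
  | .unite t _ _ => t.isAdjArc
  | .addAdj t S₁ S₂ => fun A B => t.isAdjArc A B ∨ (A = S₁ ∧ B = S₂)

/-- The three kinds of gates associated with a label of the decomposition. -/
inductive GK where
  | oand : GK
  | oor : GK
  | inn : GK
deriving DecidableEq

/-- Gates of the circuit `F*` are pairs (label, kind); for a singleton label
the three gates coincide with the original gate, canonically represented with
kind `oand`. -/
def canon (p : Finset V × GK) : Finset V × GK :=
  if p.1.card = 1 then (p.1, GK.oand) else p

/-- An original gate of `F*`: the gate corresponding to a singleton label. -/
def OriginalGate (T : SCD V) (g : Finset V × GK) : Prop :=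
  ∃ v : V, ({v} : Finset V) ∈ T.allLabels ∧ g = ({v}, GK.oand)

/-- The three kinds of wires of `F*`. -/
inductive WKind where
  | cp : WKind   -- child-parent wire
  | pc : WKind   -- parent-child wire
  | adj : WKind  -- adjacency wire
deriving DecidableEq

/-- The wires of `F*`: child-parent wires from `oand`/`oor` of a child label to
that of its parent; parent-child wires from `in` of a parent label to `in` of a
child label; and, for each adjacency arc from `S₁` to `S₂`, an adjacency wire
from `oand(S₁)` or `oor(S₁)` (as chosen by `sel`) to `in(S₂)`. -/
def wire (T : SCD V) (sel : Finset V → Finset V → GK) :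
    WKind → Finset V × GK → Finset V × GK → Prop
  | .cp, g₁, g₂ => ∃ (S₁ S₂ : Finset V) (k : GK),
      (k = GK.oand ∨ k = GK.oor) ∧ T.isChild S₁ S₂ ∧
      g₁ = canon (S₁, k) ∧ g₂ = canon (S₂, k)
  | .pc, g₁, g₂ => ∃ S₁ S₂ : Finset V, T.isChild S₁ S₂ ∧
      g₁ = canon (S₂, GK.inn) ∧ g₂ = canon (S₁, GK.inn)
  | .adj, g₁, g₂ => ∃ S₁ S₂ : Finset V, T.isAdjArc S₁ S₂ ∧
      g₁ = canon (S₁, sel S₁ S₂) ∧ g₂ = canon (S₂, GK.inn)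

/-- A path in the DAG of `F*` from `a` to `b` whose wires have the listed kinds. -/
inductive RelChain {α : Type} (step : WKind → α → α → Prop) : α → α → List WKind → Prop
  | nil (a : α) : RelChain step a a []
  | cons {a b c : α} {w : WKind} {ws : List WKind} :
      step w a b → RelChain step b c ws → RelChain step a c (w :: ws)

/-! A parent label is the union of two distinct nonempty labels, so it is not a singleton and its
three gates `oand`, `oor`, `in` are distinct. Hence a child-parent wire always ends at an `oand`
or `oor` gate of a non-singleton label, and a parent-child wire always starts at an `in` gate.
Along an adjacency-free path starting at an original gate (an `oand` gate) no `in` gate is ever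
reached, so no parent-child wire can occur; along one ending at an original gate, walking
backwards, every gate is an `in` gate or a singleton, so no child-parent wire can occur. -/

theorem Finset.one_lt_card_union_of_ne {α : Type*} [DecidableEq α] {A B : Finset α}
    (hA : A.Nonempty) (hB : B.Nonempty) (hne : A ≠ B) : 1 < (A ∪ B).card := by
  by_contra hle
  have hsub : ∀ x ∈ A ∪ B, ∀ y ∈ A ∪ B, x = y := Finset.card_le_one.mp (not_lt.mp hle)
  obtain ⟨a, ha⟩ := hA
  obtain ⟨b, hb⟩ := hB
  apply hne
  ext x
  constructor
  · intro hx
    rwa [hsub x (Finset.mem_union_left _ hx) b (Finset.mem_union_right _ hb)]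
  · intro hx
    rwa [hsub x (Finset.mem_union_right _ hx) a (Finset.mem_union_left _ ha)]

namespace RelChain

variable {α : Type} {step : WKind → α → α → Prop} {P : α → Prop}
  {ok good : WKind → Prop}

theorem forall_of_forward_invariant
    (hstep : ∀ w a b, step w a b → ok w → P a → good w ∧ P b)
    {a c : α} {ws : List WKind} (hchain : RelChain step a c ws) (hok : ∀ w ∈ ws, ok w)
    (ha : P a) : ∀ w ∈ ws, good w := by
  induction hchain with
  | nil => simp
  | @cons a b c w ws hab _ ih =>
    rw [List.forall_mem_cons] at hok ⊢
    obtain ⟨hw, hb⟩ := hstep w a b hab hok.1 ha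
    exact ⟨hw, ih hok.2 hb⟩

theorem forall_of_backward_invariant
    (hstep : ∀ w a b, step w a b → ok w → P b → good w ∧ P a)
    {a c : α} {ws : List WKind} (hchain : RelChain step a c ws) (hok : ∀ w ∈ ws, ok w)
    (hc : P c) : (∀ w ∈ ws, good w) ∧ P a := by
  induction hchain with
  | nil => simpa using hc
  | @cons a b c w ws hab _ ih =>
    rw [List.forall_mem_cons] at hok ⊢
    obtain ⟨hws, hb⟩ := ih hok.2 hc
    obtain ⟨hw, ha⟩ := hstep w a b hab hok.1 hb
    exact ⟨⟨hw, hws⟩, ha⟩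

end RelChain

namespace SCD

theorem nonempty_of_mem_labels {T : SCD V} (hT : T.WF) {S : Finset V} (hS : S ∈ T.labels) :
    S.Nonempty := by
  induction T generalizing S with
  | leaf v =>
    rw [labels, Finset.mem_singleton] at hS
    exact hS ▸ Finset.singleton_nonempty v
  | union l r ihl ihr =>
    rcases Finset.mem_union.mp hS with h | h
    exacts [ihl hT.1 h, ihr hT.2.1 h]
  | addVertex t v ih =>
    rcases Finset.mem_union.mp hS with h | h
    · exact ih hT.1 h
    · exact Finset.mem_singleton.mp h ▸ Finset.singleton_nonempty v
  | unite t S₁ S₂ ih =>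
    rcases Finset.mem_union.mp hS with h | h
    · exact ih hT.1 (Finset.mem_sdiff.mp h).1
    · exact Finset.mem_singleton.mp h ▸ (ih hT.1 hT.2.1).mono Finset.subset_union_left
  | addAdj t S₁ S₂ ih => exact ih hT.1 hS

theorem one_lt_card_of_isChild {T : SCD V} (hT : T.WF) {A B : Finset V} (h : T.isChild A B) :
    1 < B.card := by
  induction T with
  | leaf v => exact h.elim
  | union l r ihl ihr => exact h.elim (ihl hT.1) (ihr hT.2.1)
  | addVertex t v ih => exact ih hT.1 h
  | unite t S₁ S₂ ih =>
    obtain ⟨hWF, h₁, h₂, hne⟩ := hT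
    rcases h with h | ⟨-, rfl⟩
    · exact ih hWF h
    · exact Finset.one_lt_card_union_of_ne (nonempty_of_mem_labels hWF h₁)
        (nonempty_of_mem_labels hWF h₂) hne
  | addAdj t S₁ S₂ ih => exact ih hT.1 h

end SCD

omit [DecidableEq V] in
theorem canon_of_one_lt_card {S : Finset V} (h : 1 < S.card) (k : GK) : canon (S, k) = (S, k) :=
  if_neg h.ne'

section wire

variable {T : SCD V} {sel : Finset V → Finset V → GK} {w : WKind} {a b : Finset V × GK}

theorem wire_eq_cp_of_src_ne_inn (hT : T.WF) (hab : wire T sel w a b) (hw : w ≠ WKind.adj)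
    (ha : a.2 ≠ GK.inn) : w = WKind.cp ∧ b.2 ≠ GK.inn := by
  cases w with
  | cp =>
    obtain ⟨_, S₂, k, hk, hch, -, rfl⟩ := hab
    rw [canon_of_one_lt_card (SCD.one_lt_card_of_isChild hT hch)]
    refine ⟨rfl, ?_⟩
    rcases hk with rfl | rfl <;> simp
  | pc =>
    obtain ⟨_, S₂, hch, rfl, -⟩ := hab
    rw [canon_of_one_lt_card (SCD.one_lt_card_of_isChild hT hch)] at ha
    exact absurd rfl ha
  | adj => exact absurd rfl hw

theorem wire_eq_pc_of_tgt_inn_or_singleton (hT : T.WF) (hab : wire T sel w a b)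
    (hw : w ≠ WKind.adj) (hb : b.2 = GK.inn ∨ b.1.card = 1) : w = WKind.pc ∧ (a.2 = GK.inn ∨ a.1.card = 1) := by
  cases w with
  | cp =>
    obtain ⟨_, S₂, k, hk, hch, -, rfl⟩ := hab
    have hcard := SCD.one_lt_card_of_isChild hT hch
    rw [canon_of_one_lt_card hcard] at hb
    rcases hb with hb | hb
    · rcases hk with rfl | rfl <;> cases hb
    · exact absurd hb hcard.ne'
  | pc =>
    obtain ⟨_, S₂, hch, rfl, -⟩ := hab
    rw [canon_of_one_lt_card (SCD.one_lt_card_of_isChild hT hch)]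
    exact ⟨rfl, Or.inl rfl⟩
  | adj => exact absurd rfl hw

end wire

theorem fstar_adjacency_free_paths_general (T : SCD V) (hWF : T.WF)
    (sel : Finset V → Finset V → GK)
    (g₁ g₂ : Finset V × GK) (ws : List WKind)
    (hpath : RelChain (wire T sel) g₁ g₂ ws) (hnoadj : WKind.adj ∉ ws) :
    (OriginalGate T g₁ → ∀ w ∈ ws, w = WKind.cp) ∧
    (OriginalGate T g₂ → ∀ w ∈ ws, w = WKind.pc) := by
  have hok : ∀ w ∈ ws, w ≠ WKind.adj := fun w hw h => hnoadj (h ▸ hw)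
  constructor
  · rintro ⟨v, -, rfl⟩
    exact hpath.forall_of_forward_invariant (fun _ _ _ hab => wire_eq_cp_of_src_ne_inn hWF hab)
      hok nofun
  · rintro ⟨v, -, rfl⟩
    exact (hpath.forall_of_backward_invariant
      (fun _ _ _ hab => wire_eq_pc_of_tgt_inn_or_singleton hWF hab) hok
      (Or.inr (Finset.card_singleton v))).1

/-- In `F*`, every path starting at an original gate and containing no
adjacency wires consists only of child-parent wires, and every path ending at
an original gate and containing no adjacency wires consists only of
parent-child wires. -/
theorem fstar_adjacency_free_paths (T : SCD V) (hWF : T.WF)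
    (sel : Finset V → Finset V → GK) (hsel : ∀ A B, sel A B ≠ GK.inn)
    (g₁ g₂ : Finset V × GK) (ws : List WKind)
    (hpath : RelChain (wire T sel) g₁ g₂ ws) (hnoadj : WKind.adj ∉ ws) :
    (OriginalGate T g₁ → ∀ w ∈ ws, w = WKind.cp) ∧
    (OriginalGate T g₂ → ∀ w ∈ ws, w = WKind.pc) :=
  fstar_adjacency_free_paths_general T hWF sel g₁ g₂ ws hpath hnoadj
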